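/- The pathetic infinitesimals are idempotent: ⧾∞ + ⧾∞ = ⧾∞ and ⧿∞ + ⧿∞ = ⧿∞, where ⧾∞ = {0 | {0 | ∞̄}} and ⧿∞ = {{∞ | 0} | 0}. -/
import Mathlib


inductive AGame : Type
  | inf : AGame
  | binf : AGame
  | node : List AGame → List AGame → AGame

namespace AGame

/-- The affine games: option sets are nonempty (hereditarily). -/
inductive Valid : AGame → Prop
  | inf : Valid .inf
  | binf : Valid .binf
  | node : ∀ {L R : List AGame}, L ≠ [] → R ≠ [] →
      (∀ g ∈ L, Valid g) → (∀ g ∈ R, Valid g) → Valid (.node L R)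

/-- Total version of the disjunctive sum (value on the undefined cases `∞ + ∞̄` is junk). -/
def add' : AGame → AGame → AGame
  | .inf, _ => .inf
  | _, .inf => .inf
  | .binf, _ => .binf
  | _, .binf => .binf
  | .node L R, .node L' R' =>
      .node ((L.attach.map fun x => add' x.1 (.node L' R')) ++
             (L'.attach.map fun y => add' (.node L R) y.1))
            ((R.attach.map fun x => add' x.1 (.node L' R')) ++
             (R'.attach.map fun y => add' (.node L R) y.1))
termination_by G H => sizeOf G + sizeOf H
decreasing_by
  all_goals
    simp_wf
    first
      | (have := List.sizeOf_lt_of_mem x.2; simp_all; omega)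
      | (have := List.sizeOf_lt_of_mem y.2; simp_all; omega)

/-- The disjunctive sum, undefined (`none`) exactly when adding `∞` to `∞̄`. -/
def add : AGame → AGame → Option AGame
  | .inf, .binf => none
  | .binf, .inf => none
  | G, H => some (add' G H)

mutual
/-- `o^L(G) = L` : Left, playing first, wins `G`. -/
def lf : AGame → Bool
  | .inf => true
  | .binf => false
  | .node L _ => L.attach.any fun x => ls x.1
termination_by G => sizeOf G
decreasing_by
  simp_wf; have := List.sizeOf_lt_of_mem x.2; simp_all; omega
/-- `o^R(G) = L` : Left, playing second, wins `G`. -/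
def ls : AGame → Bool
  | .inf => true
  | .binf => false
  | .node _ R => R.attach.all fun x => lf x.1
termination_by G => sizeOf G
decreasing_by
  simp_wf; have := List.sizeOf_lt_of_mem x.2; simp_all; omega
end

/-- The combined outcome `(o^L(G), o^R(G))`, encoded as a pair of booleans
(`true` = Left wins). `(true,true)` is 𝓛, `(true,false)` is 𝓝, `(false,true)` is 𝓟,
`(false,false)` is 𝓡. -/
def outcome (G : AGame) : Bool × Bool := (lf G, ls G)

/-- The partial order of outcomes (componentwise, 𝓛 maximal, 𝓡 minimal, 𝓝 ∥ 𝓟). -/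
def OutLE (a b : Bool × Bool) : Prop :=
  (a.1 = true → b.1 = true) ∧ (a.2 = true → b.2 = true)

/-- `G ≥ H` : replacing `H` by `G` never hurts Left in any disjunctive sum. -/
def GE (G H : AGame) : Prop :=
  ∀ X : AGame, Valid X → X ≠ .inf → X ≠ .binf →
    OutLE (outcome (add' H X)) (outcome (add' G X))

/-- Game equivalence. -/
def Equiv (G H : AGame) : Prop :=
  ∀ X : AGame, Valid X → X ≠ .inf → X ≠ .binf →
    outcome (add' G X) = outcome (add' H X)

/-- The zero game `{∞̄ | ∞}`. -/
def zero : AGame := .node [.binf] [.inf]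

/-- The conjugate (players switch roles). -/
def neg : AGame → AGame
  | .inf => .binf
  | .binf => .inf
  | .node L R =>
      .node (R.attach.map fun x => neg x.1) (L.attach.map fun x => neg x.1)
termination_by G => sizeOf G
decreasing_by
  all_goals
    simp_wf
    (have := List.sizeOf_lt_of_mem x.2; simp_all; omega)


/-- Left option set (empty list for the terminating games). -/
def leftOptions : AGame → List AGame
  | .node L _ => L
  | _ => []

/-- Right option set (empty list for the terminating games). -/
def rightOptions : AGame → List AGame
  | .node _ R => R
  | _ => []

/-- A check: a game having `∞` as a Left option or `∞̄` as a Right option. -/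
def IsCheck : AGame → Prop
  | .node L R => .inf ∈ L ∨ .binf ∈ R
  | _ => False

/-- `Follower H G` : `H` is a follower of `G` (i.e. `G` itself, an option of `G`,
an option of an option, and so on). -/
inductive Follower : AGame → AGame → Prop
  | refl (G : AGame) : Follower G G
  | left {H K : AGame} {L R : List AGame} : K ∈ L → Follower H K → Follower H (.node L R)
  | right {H K : AGame} {L R : List AGame} : K ∈ R → Follower H K → Follower H (.node L R)

/-- A Conway form: distinct from `∞` and `∞̄`, with no checks among its followers. -/
def ConwayForm (G : AGame) : Prop :=
  G ≠ .inf ∧ G ≠ .binf ∧ ∀ H, Follower H G → ¬ IsCheck H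

/-- A Conway game: a game equivalent to some Conway form. -/
def ConwayGame (G : AGame) : Prop :=
  ∃ G', Valid G' ∧ ConwayForm G' ∧ Equiv G G'

/-- `J` is invertible: `J + K = 0` (in the sense of game equivalence) for some affine `K`. -/
def Invertible (J : AGame) : Prop :=
  ∃ K, Valid K ∧ ∃ S, add J K = some S ∧ Equiv S zero

/-- Number forms: the images of the surreal-number Conway forms under the embedding
that replaces an empty option set by `{∞̄}` on the Left and by `{∞}` on the Right.
Every genuine Left option is strictly less than every genuine Right option, and
all genuine options are again number forms. -/
inductive NumForm : AGame → Prop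
  | mk {L R : List AGame}
      (hL0 : L ≠ []) (hR0 : R ≠ [])
      (hLb : .binf ∈ L → L = [.binf]) (hRi : .inf ∈ R → R = [.inf])
      (hLnum : ∀ x ∈ L, x ≠ .binf → NumForm x)
      (hRnum : ∀ y ∈ R, y ≠ .inf → NumForm y)
      (hlt : ∀ x ∈ L, ∀ y ∈ R, x ≠ .binf → y ≠ .inf → GE y x ∧ ¬ GE x y) :
      NumForm (.node L R)

/-- A number: an affine game equal to (the image of) a Conway number form. -/
def IsNumber (G : AGame) : Prop := ∃ n, Valid n ∧ NumForm n ∧ Equiv G n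

/-- The pathetic tiny `⧾∞ = {0 | {0 | ∞̄}}`. -/
def tinyInf : AGame := .node [zero] [.node [zero] [.binf]]

/-- The pathetic miny `⧿∞ = {{∞ | 0} | 0}`. -/
def minyInf : AGame := .node [.node [.inf] [zero]] [zero]

end AGame

namespace AGame
set_option linter.dupNamespace false
set_option maxHeartbeats 1000000

lemma any_attach (l : List AGame) (f : AGame → Bool) : (l.attach.any fun x => f x.1) = l.any f := by
  apply Bool.coe_iff_coe.mp
  simp [List.any_eq_true]

lemma all_attach (l : List AGame) (f : AGame → Bool) : (l.attach.all fun x => f x.1) = l.all f := by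
  apply Bool.coe_iff_coe.mp
  simp [List.all_eq_true]

lemma lf_node (L R : List AGame) : lf (.node L R) = L.any ls := by
  rw [lf, any_attach]

lemma ls_node (L R : List AGame) : ls (.node L R) = R.all lf := by
  rw [ls, all_attach]

lemma add'_node_node (L R L' R' : List AGame) :
    add' (.node L R) (.node L' R') =
      .node ((L.map fun x => add' x (.node L' R')) ++ (L'.map fun y => add' (.node L R) y))
            ((R.map fun x => add' x (.node L' R')) ++ (R'.map fun y => add' (.node L R) y)) := by
  rw [add']
  simp

@[simp] lemma lf_inf : lf .inf = true := by rw [lf]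
@[simp] lemma lf_binf : lf .binf = false := by rw [lf]
@[simp] lemma ls_inf : ls .inf = true := by rw [ls]
@[simp] lemma ls_binf : ls .binf = false := by rw [ls]

@[simp] lemma add'_inf_left (G : AGame) : add' .inf G = .inf := by cases G <;> simp [add']
@[simp] lemma add'_inf_right (G : AGame) : add' G .inf = .inf := by cases G <;> simp [add']
@[simp] lemma add'_binf_node (L R : List AGame) : add' .binf (.node L R) = .binf := by simp [add']
@[simp] lemma add'_node_binf (L R : List AGame) : add' (.node L R) .binf = .binf := by simp [add']
@[simp] lemma add'_binf_binf : add' .binf .binf = .binf := by simp [add']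

lemma sizeOf_pos (a : AGame) : 0 < sizeOf a := by cases a <;> simp

lemma sizeOf_lt_left {x : AGame} {L R : List AGame} (h : x ∈ L) :
    sizeOf x < sizeOf (AGame.node L R) := by
  have := List.sizeOf_lt_of_mem h; simp; omega

lemma sizeOf_lt_right {x : AGame} {L R : List AGame} (h : x ∈ R) :
    sizeOf x < sizeOf (AGame.node L R) := by
  have := List.sizeOf_lt_of_mem h; simp; omega

lemma lf_sum {L R L' R' : List AGame} :
    lf (add' (.node L R) (.node L' R')) = true ↔
      (∃ x ∈ L, ls (add' x (.node L' R')) = true) ∨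
      (∃ y ∈ L', ls (add' (.node L R) y) = true) := by
  rw [add'_node_node, lf_node]
  simp [List.any_eq_true]

lemma ls_sum {L R L' R' : List AGame} :
    ls (add' (.node L R) (.node L' R')) = true ↔
      (∀ x ∈ R, lf (add' x (.node L' R')) = true) ∧
      (∀ y ∈ R', lf (add' (.node L R) y) = true) := by
  rw [add'_node_node, ls_node]
  simp [List.all_eq_true]
lemma zero_def : zero = .node [.binf] [.inf] := rfl

/-- `0 + X` has the same outcome as `X`. -/
lemma zero_add : ∀ n (X : AGame), sizeOf X ≤ n →
    (lf (add' zero X) = true ↔ lf X = true) ∧ (ls (add' zero X) = true ↔ ls X = true) := by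
  intro n
  induction n with
  | zero => intro X hX; have := sizeOf_pos X; omega
  | succ n IH =>
    intro X hX
    cases X with
    | inf => simp [zero_def]
    | binf => simp [zero_def]
    | node L R =>
      constructor
      · rw [zero_def, lf_sum, lf_node, List.any_eq_true]
        constructor
        · rintro (⟨x, hx, h⟩ | ⟨y, hy, h⟩)
          · simp at hx; subst hx; simp at h
          · have hsz : sizeOf y ≤ n := by
              have := sizeOf_lt_left (L := L) (R := R) hy; omega
            exact ⟨y, hy, ((IH y hsz).2).mp h⟩
        · rintro ⟨y, hy, h⟩
          refine Or.inr ⟨y, hy, ?_⟩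
          have hsz : sizeOf y ≤ n := by
            have := sizeOf_lt_left (L := L) (R := R) hy; omega
          exact ((IH y hsz).2).mpr h
      · rw [zero_def, ls_sum, ls_node, List.all_eq_true]
        constructor
        · rintro ⟨h1, h2⟩ y hy
          have hsz : sizeOf y ≤ n := by
            have := sizeOf_lt_right (L := L) (R := R) hy; omega
          exact ((IH y hsz).1).mp (h2 y hy)
        · intro h
          refine ⟨by simp, fun y hy => ?_⟩
          have hsz : sizeOf y ≤ n := by
            have := sizeOf_lt_right (L := L) (R := R) hy; omega
          exact ((IH y hsz).1).mpr (h y hy)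
lemma zero_add_node (La Ra : List AGame) :
    add' zero (.node La Ra) =
      .node (.binf :: La.map (fun a' => add' zero a'))
            (.inf :: Ra.map (fun a' => add' zero a')) := by
  rw [zero_def, add'_node_node]; simp

lemma add_zero_node (La Ra : List AGame) :
    add' (.node La Ra) zero =
      .node ((La.map (fun a' => add' a' zero)) ++ [.binf])
            ((Ra.map (fun a' => add' a' zero)) ++ [.inf]) := by
  rw [zero_def, add'_node_node]
  simp

/-- `(0 + a) + X` has the same outcome as `a + X`. -/
lemma zadd : ∀ n (a X : AGame), sizeOf a + sizeOf X ≤ n →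
    (lf (add' (add' zero a) X) = true ↔ lf (add' a X) = true) ∧
    (ls (add' (add' zero a) X) = true ↔ ls (add' a X) = true) := by
  intro n
  induction n with
  | zero => intro a X h; have := sizeOf_pos a; have := sizeOf_pos X; omega
  | succ n IH =>
    intro a X hn
    cases a with
    | inf => simp
    | binf => simp [zero_def]
    | node La Ra =>
      cases X with
      | inf => simp
      | binf => rw [zero_add_node]; simp
      | node LX RX =>
        have hsz1 : ∀ a' ∈ La, sizeOf a' + sizeOf (AGame.node LX RX) ≤ n := by
          intro a' h
          have := sizeOf_lt_left (L := La) (R := Ra) h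
          omega
        have hsz2 : ∀ X' ∈ LX, sizeOf (AGame.node La Ra) + sizeOf X' ≤ n := by
          intro X' h
          have := sizeOf_lt_left (L := LX) (R := RX) h
          omega
        have hsz3 : ∀ a' ∈ Ra, sizeOf a' + sizeOf (AGame.node LX RX) ≤ n := by
          intro a' h
          have := sizeOf_lt_right (L := La) (R := Ra) h
          omega
        have hsz4 : ∀ X' ∈ RX, sizeOf (AGame.node La Ra) + sizeOf X' ≤ n := by
          intro X' h
          have := sizeOf_lt_right (L := LX) (R := RX) h
          omega
        constructor
        · rw [zero_add_node, lf_sum, lf_sum]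
          constructor
          · rintro (⟨x, hx, h⟩ | ⟨y, hy, h⟩)
            · rcases List.mem_cons.mp hx with rfl | hx
              · simp at h
              · obtain ⟨a', ha', rfl⟩ := List.mem_map.mp hx
                exact Or.inl ⟨a', ha', ((IH a' _ (hsz1 a' ha')).2).mp h⟩
            · rw [← zero_add_node] at h
              exact Or.inr ⟨y, hy, ((IH _ y (hsz2 y hy)).2).mp h⟩
          · rintro (⟨x, hx, h⟩ | ⟨y, hy, h⟩)
            · refine Or.inl ⟨add' zero x, List.mem_cons.mpr (Or.inr (List.mem_map.mpr ⟨x, hx, rfl⟩)), ?_⟩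
              exact ((IH x _ (hsz1 x hx)).2).mpr h
            · refine Or.inr ⟨y, hy, ?_⟩
              rw [← zero_add_node]
              exact ((IH _ y (hsz2 y hy)).2).mpr h
        · rw [zero_add_node, ls_sum, ls_sum]
          constructor
          · rintro ⟨h1, h2⟩
            constructor
            · intro x hx
              have := h1 (add' zero x) (List.mem_cons.mpr (Or.inr (List.mem_map.mpr ⟨x, hx, rfl⟩)))
              exact ((IH x _ (hsz3 x hx)).1).mp this
            · intro y hy
              have := h2 y hy
              rw [← zero_add_node] at this
              exact ((IH _ y (hsz4 y hy)).1).mp this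
          · rintro ⟨h1, h2⟩
            constructor
            · intro x hx
              rcases List.mem_cons.mp hx with rfl | hx
              · simp
              · obtain ⟨a', ha', rfl⟩ := List.mem_map.mp hx
                exact ((IH a' _ (hsz3 a' ha')).1).mpr (h1 a' ha')
            · intro y hy
              rw [← zero_add_node]
              exact ((IH _ y (hsz4 y hy)).1).mpr (h2 y hy)
/-- `(a + 0) + X` has the same outcome as `a + X`. -/
lemma addz : ∀ n (a X : AGame), sizeOf a + sizeOf X ≤ n →
    (lf (add' (add' a zero) X) = true ↔ lf (add' a X) = true) ∧
    (ls (add' (add' a zero) X) = true ↔ ls (add' a X) = true) := by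
  intro n
  induction n with
  | zero => intro a X h; have := sizeOf_pos a; have := sizeOf_pos X; omega
  | succ n IH =>
    intro a X hn
    cases a with
    | inf => simp
    | binf => simp [zero_def]
    | node La Ra =>
      cases X with
      | inf => simp
      | binf => rw [add_zero_node]; simp
      | node LX RX =>
        have hsz1 : ∀ a' ∈ La, sizeOf a' + sizeOf (AGame.node LX RX) ≤ n := by
          intro a' h
          have := sizeOf_lt_left (L := La) (R := Ra) h
          omega
        have hsz2 : ∀ X' ∈ LX, sizeOf (AGame.node La Ra) + sizeOf X' ≤ n := by
          intro X' h
          have := sizeOf_lt_left (L := LX) (R := RX) h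
          omega
        have hsz3 : ∀ a' ∈ Ra, sizeOf a' + sizeOf (AGame.node LX RX) ≤ n := by
          intro a' h
          have := sizeOf_lt_right (L := La) (R := Ra) h
          omega
        have hsz4 : ∀ X' ∈ RX, sizeOf (AGame.node La Ra) + sizeOf X' ≤ n := by
          intro X' h
          have := sizeOf_lt_right (L := LX) (R := RX) h
          omega
        constructor
        · rw [add_zero_node, lf_sum, lf_sum]
          constructor
          · rintro (⟨x, hx, h⟩ | ⟨y, hy, h⟩)
            · rcases List.mem_append.mp hx with hx | hx
              · obtain ⟨a', ha', rfl⟩ := List.mem_map.mp hx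
                exact Or.inl ⟨a', ha', ((IH a' _ (hsz1 a' ha')).2).mp h⟩
              · rw [List.mem_singleton.mp hx] at h
                simp at h
            · rw [← add_zero_node] at h
              exact Or.inr ⟨y, hy, ((IH _ y (hsz2 y hy)).2).mp h⟩
          · rintro (⟨x, hx, h⟩ | ⟨y, hy, h⟩)
            · refine Or.inl ⟨add' x zero, List.mem_append.mpr (Or.inl (List.mem_map.mpr ⟨x, hx, rfl⟩)), ?_⟩
              exact ((IH x _ (hsz1 x hx)).2).mpr h
            · refine Or.inr ⟨y, hy, ?_⟩
              rw [← add_zero_node]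
              exact ((IH _ y (hsz2 y hy)).2).mpr h
        · rw [add_zero_node, ls_sum, ls_sum]
          constructor
          · rintro ⟨h1, h2⟩
            constructor
            · intro x hx
              have := h1 (add' x zero) (List.mem_append.mpr (Or.inl (List.mem_map.mpr ⟨x, hx, rfl⟩)))
              exact ((IH x _ (hsz3 x hx)).1).mp this
            · intro y hy
              have := h2 y hy
              rw [← add_zero_node] at this
              exact ((IH _ y (hsz4 y hy)).1).mp this
          · rintro ⟨h1, h2⟩
            constructor
            · intro x hx
              rcases List.mem_append.mp hx with hx | hx
              · obtain ⟨a', ha', rfl⟩ := List.mem_map.mp hx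
                exact ((IH a' _ (hsz3 a' ha')).1).mpr (h1 a' ha')
              · rw [List.mem_singleton.mp hx]
                simp
            · intro y hy
              rw [← add_zero_node]
              exact ((IH _ y (hsz4 y hy)).1).mpr (h2 y hy)
/-- The right option `{0 | ∞̄}` of `⧾∞`. -/
def dT : AGame := .node [zero] [.binf]

lemma tiny_def : tinyInf = .node [zero] [dT] := rfl

/-- A game with `∞̄` among its right options, plus a node, is lost by Left moving second. -/
lemma ls_add_binf_iff {L R : List AGame} (h : AGame.binf ∈ R) (X : AGame) :
    ls (add' (.node L R) X) = true ↔ X = .inf := by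
  cases X with
  | inf => simp
  | binf => simp
  | node LX RX =>
    rw [ls_sum]
    constructor
    · rintro ⟨h1, -⟩
      have := h1 _ h
      simp at this
    · intro h; exact absurd h (by simp)

/-- Outcome formula for `{0 | ∞̄} + X`, `X` a node. -/
lemma lf_dT_add {LX RX : List AGame} :
    lf (add' dT (.node LX RX)) = true ↔ (ls (.node LX RX) = true ∨ AGame.inf ∈ LX) := by
  rw [dT, lf_sum]
  constructor
  · rintro (⟨x, hx, h⟩ | ⟨y, hy, h⟩)
    · rw [List.mem_singleton.mp hx] at h
      exact Or.inl ((zero_add _ _ le_rfl).2.mp h)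
    · have := (ls_add_binf_iff (L := [zero]) (R := [.binf]) (by simp) y).mp h
      subst this
      exact Or.inr hy
  · rintro (h | h)
    · exact Or.inl ⟨zero, by simp, (zero_add _ _ le_rfl).2.mpr h⟩
    · refine Or.inr ⟨.inf, h, by simp⟩

/-- `⧾∞ + X` is at least as good for Left as `X` ("⧾∞ ≥ 0"). -/
lemma tiny_ge : ∀ n (X : AGame), sizeOf X ≤ n →
    (lf X = true → lf (add' tinyInf X) = true) ∧
    (ls X = true → ls (add' tinyInf X) = true) := by
  intro n
  induction n with
  | zero => intro X h; have := sizeOf_pos X; omega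
  | succ n IH =>
    intro X hX
    cases X with
    | inf => simp
    | binf => simp
    | node L R =>
      constructor
      · intro h
        rw [lf_node, List.any_eq_true] at h
        obtain ⟨x, hx, hls⟩ := h
        rw [tiny_def, lf_sum]
        refine Or.inr ⟨x, hx, ?_⟩
        cases x with
        | inf => simp
        | binf => simp at hls
        | node Lx Rx =>
          have hsz : sizeOf (AGame.node Lx Rx) ≤ n := by
            have := sizeOf_lt_left (L := L) (R := R) hx; omega
          exact (IH _ hsz).2 hls
      · intro h
        rw [tiny_def, ls_sum]
        constructor
        · intro u hu
          rw [List.mem_singleton.mp hu]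
          have : lf (add' dT (.node L R)) = true := by
            rw [lf_dT_add]
            exact Or.inl h
          exact this
        · intro y hy
          rw [ls_node, List.all_eq_true] at h
          have hlf := h y hy
          cases y with
          | inf => simp
          | binf => simp at hlf
          | node Ly Ry =>
            have hsz : sizeOf (AGame.node Ly Ry) ≤ n := by
              have := sizeOf_lt_right (L := L) (R := R) hy; omega
            exact (IH _ hsz).1 hlf
lemma add_TT_eq :
    add' tinyInf tinyInf =
      .node [add' zero tinyInf, add' tinyInf zero] [add' dT tinyInf, add' tinyInf dT] := by
  rw [tiny_def, add'_node_node]; simp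

lemma add_dTT_eq :
    add' dT tinyInf =
      .node [add' zero tinyInf, add' dT zero] [.binf, add' dT dT] := by
  rw [tiny_def, dT, add'_node_node]; simp

lemma add_TdT_eq :
    add' tinyInf dT =
      .node [add' zero dT, add' tinyInf zero] [add' dT dT, .binf] := by
  rw [tiny_def, dT, add'_node_node]; simp

lemma lf_T_add {LX RX : List AGame} :
    lf (add' tinyInf (.node LX RX)) = true ↔
      (ls (.node LX RX) = true ∨ ∃ X' ∈ LX, ls (add' tinyInf X') = true) := by
  rw [tiny_def, lf_sum, ← tiny_def]
  constructor
  · rintro (⟨x, hx, h⟩ | h)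
    · rw [List.mem_singleton.mp hx] at h
      exact Or.inl ((zero_add _ _ le_rfl).2.mp h)
    · exact Or.inr h
  · rintro (h | h)
    · exact Or.inl ⟨zero, by simp, (zero_add _ _ le_rfl).2.mpr h⟩
    · exact Or.inr h

lemma ls_T_add {LX RX : List AGame} :
    ls (add' tinyInf (.node LX RX)) = true ↔
      (lf (add' dT (.node LX RX)) = true ∧ ∀ X'' ∈ RX, lf (add' tinyInf X'') = true) := by
  rw [tiny_def, ls_sum, ← tiny_def]
  constructor
  · rintro ⟨h1, h2⟩
    exact ⟨h1 dT (by simp), h2⟩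
  · rintro ⟨h1, h2⟩
    exact ⟨fun u hu => by rw [List.mem_singleton.mp hu]; exact h1, h2⟩

lemma lf_TT_add {LX RX : List AGame} :
    lf (add' (add' tinyInf tinyInf) (.node LX RX)) = true ↔
      (ls (add' tinyInf (.node LX RX)) = true ∨
       ∃ X' ∈ LX, ls (add' (add' tinyInf tinyInf) X') = true) := by
  rw [add_TT_eq, lf_sum, ← add_TT_eq]
  constructor
  · rintro (⟨x, hx, h⟩ | h)
    · rcases List.mem_cons.mp hx with rfl | hx
      · exact Or.inl ((zadd _ _ _ le_rfl).2.mp h)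
      · rw [List.mem_singleton.mp hx] at h
        exact Or.inl ((addz _ _ _ le_rfl).2.mp h)
    · exact Or.inr h
  · rintro (h | h)
    · exact Or.inl ⟨add' zero tinyInf, by simp, (zadd _ _ _ le_rfl).2.mpr h⟩
    · exact Or.inr h

lemma ls_TT_add {LX RX : List AGame} :
    ls (add' (add' tinyInf tinyInf) (.node LX RX)) = true ↔
      ((lf (add' (add' dT tinyInf) (.node LX RX)) = true ∧
        lf (add' (add' tinyInf dT) (.node LX RX)) = true) ∧
       ∀ X'' ∈ RX, lf (add' (add' tinyInf tinyInf) X'') = true) := by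
  rw [add_TT_eq, ls_sum, ← add_TT_eq]
  constructor
  · rintro ⟨h1, h2⟩
    exact ⟨⟨h1 _ (by simp), h1 _ (by simp)⟩, h2⟩
  · rintro ⟨⟨ha, hb⟩, h2⟩
    refine ⟨fun x hx => ?_, h2⟩
    rcases List.mem_cons.mp hx with rfl | hx
    · exact ha
    · rw [List.mem_singleton.mp hx]
      exact hb

lemma lf_dTT_add {LX RX : List AGame} :
    lf (add' (add' dT tinyInf) (.node LX RX)) = true ↔
      (ls (add' tinyInf (.node LX RX)) = true ∨ AGame.inf ∈ LX) := by
  rw [add_dTT_eq, lf_sum]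
  constructor
  · rintro (⟨x, hx, h⟩ | ⟨y, hy, h⟩)
    · rcases List.mem_cons.mp hx with rfl | hx
      · exact Or.inl ((zadd _ _ _ le_rfl).2.mp h)
      · rw [List.mem_singleton.mp hx] at h
        have h' : ls (add' dT (.node LX RX)) = true := (addz _ _ _ le_rfl).2.mp h
        have := (ls_add_binf_iff (L := [zero]) (R := [.binf]) (by simp) _).mp h'
        simp at this
    · have := (ls_add_binf_iff (L := [add' zero tinyInf, add' dT zero])
        (R := [.binf, add' dT dT]) (by simp) y).mp h
      subst this
      exact Or.inr hy
  · rintro (h | h)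
    · exact Or.inl ⟨add' zero tinyInf, by simp, (zadd _ _ _ le_rfl).2.mpr h⟩
    · exact Or.inr ⟨.inf, h, by simp⟩

lemma lf_TdT_add {LX RX : List AGame} :
    lf (add' (add' tinyInf dT) (.node LX RX)) = true ↔
      (ls (add' tinyInf (.node LX RX)) = true ∨ AGame.inf ∈ LX) := by
  rw [add_TdT_eq, lf_sum]
  constructor
  · rintro (⟨x, hx, h⟩ | ⟨y, hy, h⟩)
    · rcases List.mem_cons.mp hx with rfl | hx
      · have h' : ls (add' dT (.node LX RX)) = true := (zadd _ _ _ le_rfl).2.mp h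
        have := (ls_add_binf_iff (L := [zero]) (R := [.binf]) (by simp) _).mp h'
        simp at this
      · rw [List.mem_singleton.mp hx] at h
        exact Or.inl ((addz _ _ _ le_rfl).2.mp h)
    · have := (ls_add_binf_iff (L := [add' zero dT, add' tinyInf zero])
        (R := [add' dT dT, .binf]) (by simp) y).mp h
      subst this
      exact Or.inr hy
  · rintro (h | h)
    · exact Or.inl ⟨add' tinyInf zero, by simp, (addz _ _ _ le_rfl).2.mpr h⟩
    · exact Or.inr ⟨.inf, h, by simp⟩

/-- Main lemma: `⧾∞ + ⧾∞` and `⧾∞` have the same outcome in any sum. -/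
lemma tiny_main : ∀ n (X : AGame), sizeOf X ≤ n →
    (lf (add' (add' tinyInf tinyInf) X) = true ↔ lf (add' tinyInf X) = true) ∧
    (ls (add' (add' tinyInf tinyInf) X) = true ↔ ls (add' tinyInf X) = true) := by
  intro n
  induction n with
  | zero => intro X h; have := sizeOf_pos X; omega
  | succ n IH =>
    intro X hX
    cases X with
    | inf => simp
    | binf => rw [add_TT_eq, tiny_def]; simp
    | node LX RX =>
      have hszL : ∀ X' ∈ LX, sizeOf X' ≤ n := by
        intro X' h
        have := sizeOf_lt_left (L := LX) (R := RX) h; omega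
      have hszR : ∀ X' ∈ RX, sizeOf X' ≤ n := by
        intro X' h
        have := sizeOf_lt_right (L := LX) (R := RX) h; omega
      constructor
      · constructor
        · intro h
          rcases lf_TT_add.mp h with h | ⟨X', hX', h⟩
          · rcases lf_dT_add.mp (ls_T_add.mp h).1 with h'' | h''
            · exact lf_T_add.mpr (Or.inl h'')
            · exact lf_T_add.mpr (Or.inr ⟨.inf, h'', by simp⟩)
          · exact lf_T_add.mpr (Or.inr ⟨X', hX', (IH X' (hszL X' hX')).2.mp h⟩)
        · intro h
          rcases lf_T_add.mp h with h | ⟨X', hX', h⟩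
          · exact lf_TT_add.mpr (Or.inl ((tiny_ge _ _ le_rfl).2 h))
          · exact lf_TT_add.mpr (Or.inr ⟨X', hX', (IH X' (hszL X' hX')).2.mpr h⟩)
      · constructor
        · intro h
          obtain ⟨⟨h1, _⟩, h3⟩ := ls_TT_add.mp h
          refine ls_T_add.mpr ⟨?_, fun X'' hX'' => (IH X'' (hszR X'' hX'')).1.mp (h3 X'' hX'')⟩
          rcases lf_dTT_add.mp h1 with h' | h'
          · exact (ls_T_add.mp h').1
          · exact lf_dT_add.mpr (Or.inr h')
        · intro h
          obtain ⟨hd, hQ⟩ := ls_T_add.mp h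
          refine ls_TT_add.mpr ⟨⟨?_, ?_⟩,
            fun X'' hX'' => (IH X'' (hszR X'' hX'')).1.mpr (hQ X'' hX'')⟩
          · rcases lf_dT_add.mp hd with h' | h'
            · exact lf_dTT_add.mpr (Or.inl ((tiny_ge _ _ le_rfl).2 h'))
            · exact lf_dTT_add.mpr (Or.inr h')
          · rcases lf_dT_add.mp hd with h' | h'
            · exact lf_TdT_add.mpr (Or.inl ((tiny_ge _ _ le_rfl).2 h'))
            · exact lf_TdT_add.mpr (Or.inr h')
@[simp] lemma neg_inf : neg .inf = .binf := by rw [neg]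
@[simp] lemma neg_binf : neg .binf = .inf := by rw [neg]

lemma neg_node (L R : List AGame) : neg (.node L R) = .node (R.map neg) (L.map neg) := by
  rw [neg]; simp

lemma neg_neg : ∀ n (g : AGame), sizeOf g ≤ n → neg (neg g) = g := by
  intro n
  induction n with
  | zero => intro g h; have := sizeOf_pos g; omega
  | succ n IH =>
    intro g hg
    cases g with
    | inf => simp
    | binf => simp
    | node L R =>
      rw [neg_node, neg_node, List.map_map, List.map_map]
      congr 1
      · rw [show L.map (neg ∘ neg) = L.map id from
          List.map_congr_left fun x hx => IH x (by have := sizeOf_lt_left (L := L) (R := R) hx; omega),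
          List.map_id]
      · rw [show R.map (neg ∘ neg) = R.map id from
          List.map_congr_left fun x hx => IH x (by have := sizeOf_lt_right (L := L) (R := R) hx; omega),
          List.map_id]

lemma neg_add' : ∀ n (G H : AGame), sizeOf G + sizeOf H ≤ n →
    (G = .inf → H ≠ .binf) → (G = .binf → H ≠ .inf) →
    neg (add' G H) = add' (neg G) (neg H) := by
  intro n
  induction n with
  | zero => intro G H h; have := sizeOf_pos G; have := sizeOf_pos H; omega
  | succ n IH =>
    intro G H hn h1 h2
    cases G with
    | inf =>
      cases H with
      | inf => simp
      | binf => exact absurd rfl (h1 rfl)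
      | node L R => simp [neg_node]
    | binf =>
      cases H with
      | inf => exact absurd rfl (h2 rfl)
      | binf => simp
      | node L R => simp [neg_node]
    | node L R =>
      cases H with
      | inf => simp [neg_node]
      | binf => simp [neg_node]
      | node L' R' =>
        rw [add'_node_node, neg_node, neg_node, neg_node, add'_node_node]
        congr 1
        · rw [List.map_append, List.map_map, List.map_map, List.map_map, List.map_map]
          congr 1
          · refine List.map_congr_left fun x hx => ?_
            have hx' := sizeOf_lt_right (L := L) (R := R) hx
            simp only [Function.comp_apply, ← neg_node]
            exact IH x (.node L' R') (by omega) (by simp) (by simp)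
          · refine List.map_congr_left fun y hy => ?_
            have hy' := sizeOf_lt_right (L := L') (R := R') hy
            simp only [Function.comp_apply, ← neg_node]
            exact IH (.node L R) y (by omega) (by simp) (by simp)
        · rw [List.map_append, List.map_map, List.map_map, List.map_map, List.map_map]
          congr 1
          · refine List.map_congr_left fun x hx => ?_
            have hx' := sizeOf_lt_left (L := L) (R := R) hx
            simp only [Function.comp_apply, ← neg_node]
            exact IH x (.node L' R') (by omega) (by simp) (by simp)
          · refine List.map_congr_left fun y hy => ?_
            have hy' := sizeOf_lt_left (L := L') (R := R') hy
            simp only [Function.comp_apply, ← neg_node]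
            exact IH (.node L R) y (by omega) (by simp) (by simp)

lemma any_not (l : List AGame) (f : AGame → Bool) : (l.any fun x => !f x) = !l.all f := by
  induction l with
  | nil => rfl
  | cons a t ih => simp [List.any_cons, List.all_cons, ih]

lemma all_not (l : List AGame) (f : AGame → Bool) : (l.all fun x => !f x) = !l.any f := by
  induction l with
  | nil => rfl
  | cons a t ih => simp [List.any_cons, List.all_cons, ih]

lemma any_congr' {l : List AGame} {f g : AGame → Bool} (h : ∀ x ∈ l, f x = g x) :
    l.any f = l.any g := by
  induction l with
  | nil => rfl
  | cons a t ih =>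
    simp only [List.any_cons, h a (by simp), ih fun x hx => h x (by simp [hx])]

lemma all_congr' {l : List AGame} {f g : AGame → Bool} (h : ∀ x ∈ l, f x = g x) :
    l.all f = l.all g := by
  induction l with
  | nil => rfl
  | cons a t ih =>
    simp only [List.all_cons, h a (by simp), ih fun x hx => h x (by simp [hx])]

lemma lf_ls_neg : ∀ n (g : AGame), sizeOf g ≤ n →
    lf (neg g) = !ls g ∧ ls (neg g) = !lf g := by
  intro n
  induction n with
  | zero => intro g h; have := sizeOf_pos g; omega
  | succ n IH =>
    intro g hg
    cases g with
    | inf => simp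
    | binf => simp
    | node L R =>
      constructor
      · rw [neg_node, lf_node, ls_node, List.any_map, ← any_not]
        refine any_congr' fun x hx => ?_
        simp only [Function.comp_apply]
        exact (IH x (by have := sizeOf_lt_right (L := L) (R := R) hx; omega)).2
      · rw [neg_node, ls_node, lf_node, List.all_map, ← all_not]
        refine all_congr' fun x hx => ?_
        simp only [Function.comp_apply]
        exact (IH x (by have := sizeOf_lt_left (L := L) (R := R) hx; omega)).1

lemma neg_tiny : neg tinyInf = minyInf := by
  rw [tiny_def, dT, zero_def, minyInf]
  simp [neg_node, zero_def]
/-- The pathetic infinitesimals are idempotent. -/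
theorem pathetic_idempotent :
    Equiv (add' tinyInf tinyInf) tinyInf ∧ Equiv (add' minyInf minyInf) minyInf := by
  constructor
  · intro X _ _ _
    have h := tiny_main (sizeOf X) X le_rfl
    simp only [outcome]
    rw [Bool.coe_iff_coe.mp h.1, Bool.coe_iff_coe.mp h.2]
  · intro X hv hXi hXb
    obtain ⟨LX, RX, rfl⟩ : ∃ L R, X = AGame.node L R := by
      cases X with
      | inf => exact absurd rfl hXi
      | binf => exact absurd rfl hXb
      | node L R => exact ⟨L, R, rfl⟩
    have hNY : neg (neg (AGame.node LX RX)) = AGame.node LX RX :=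
      neg_neg (sizeOf (AGame.node LX RX)) _ le_rfl
    have hMM : add' minyInf minyInf = neg (add' tinyInf tinyInf) := by
      rw [neg_add' (sizeOf tinyInf + sizeOf tinyInf) tinyInf tinyInf le_rfl
        (by simp [tiny_def]) (by simp [tiny_def]), neg_tiny]
    have f1 : neg (add' tinyInf (neg (AGame.node LX RX))) = add' minyInf (AGame.node LX RX) := by
      rw [neg_add' (sizeOf tinyInf + sizeOf (neg (AGame.node LX RX))) tinyInf _ le_rfl
        (by simp [tiny_def]) (by simp [tiny_def]), neg_tiny, hNY]
    have f2 : neg (add' (add' tinyInf tinyInf) (neg (AGame.node LX RX))) =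
        add' (add' minyInf minyInf) (AGame.node LX RX) := by
      rw [neg_add' (sizeOf (add' tinyInf tinyInf) + sizeOf (neg (AGame.node LX RX))) _ _ le_rfl
        (by simp [add_TT_eq]) (by simp [add_TT_eq]), hNY, ← hMM]
    have hmain := tiny_main (sizeOf (neg (AGame.node LX RX))) (neg (AGame.node LX RX)) le_rfl
    have e1 : lf (add' (add' tinyInf tinyInf) (neg (AGame.node LX RX))) =
        lf (add' tinyInf (neg (AGame.node LX RX))) := Bool.coe_iff_coe.mp hmain.1
    have e2 : ls (add' (add' tinyInf tinyInf) (neg (AGame.node LX RX))) =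
        ls (add' tinyInf (neg (AGame.node LX RX))) := Bool.coe_iff_coe.mp hmain.2
    have g1 := lf_ls_neg (sizeOf (add' (add' tinyInf tinyInf) (neg (AGame.node LX RX))))
      (add' (add' tinyInf tinyInf) (neg (AGame.node LX RX))) le_rfl
    have g2 := lf_ls_neg (sizeOf (add' tinyInf (neg (AGame.node LX RX))))
      (add' tinyInf (neg (AGame.node LX RX))) le_rfl
    simp only [outcome]
    rw [← f2, ← f1, g1.1, g1.2, g2.1, g2.2, e1, e2]
end AGame
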